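/- Fix n ≥ 2, σ > 0, T_s > 0, and reals b_0, …, b_k with b_i = 2^i b_0 and b_0 > 0. Define f(γ) = b_0 + b_1 γ + ⋯ + b_k γ^k and g(γ) = σ + (n/(n−1)) T_s γ, and S(γ) = f(γ) g(γ). Then S(γ) S''(γ) − 2 (S'(γ))^2 < 0 for all γ ∈ [0,1], where derivatives are with respect to γ. -/

import Mathlib

/-!
For an affine `G`, `(FG)(FG)'' − 2((FG)')² = G²(FF'' − 2F'²) − 2FF'GG' − 2F²G'²`, so it is enough
that `FF'' ≤ 2F'²` for `F(γ) = Σ_{i ≤ k} b₀ (2γ)^i`. This holds coefficientwise: the coefficient of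
`X^s` in `X²(FF'' − 2F'²)` is `b₀² 2^s Σ_j (j(j − 1) − 2j(s − j))`, the sum running over the window
`s − k ≤ j ≤ min s k`, which is symmetric about `s/2`; a window of length `N` starting at `lo`
contributes `−N·lo·(lo + N) ≤ 0`. The factor `2^i` of the exponential backoff is what makes the
product of coefficients `b_j b_{s−j}` constant on the window.
-/

open Polynomial Finset

theorem sum_Icc_window_nonpos {lo hi s : ℕ} (h : lo + hi = s) :
    ∑ j ∈ Icc lo hi, ((j : ℝ) * (j - 1) - 2 * ((s - j : ℕ) : ℝ) * j) ≤ 0 := by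
  rcases lt_or_ge hi lo with hlt | hle
  · simp [Icc_eq_empty_of_lt hlt]
  have closed_form : ∀ (N : ℕ) (x : ℝ), ∑ t ∈ range N, (((lo + t : ℕ) : ℝ) * ((lo + t : ℕ) - 1)
      - 2 * (x - (lo + t : ℕ)) * (lo + t : ℕ)) =
      N * ((lo : ℝ) * (3 * lo - 1 - 2 * x) + ((N : ℝ) - 1) * (3 * lo + N - 1 - x)) := by
    intro N x
    induction N with
    | zero => simp
    | succ N ih => rw [sum_range_succ, ih]; push_cast; ring
  have hN : ((hi + 1 - lo : ℕ) : ℝ) = hi + 1 - lo := by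
    push_cast [Nat.cast_sub (by omega : lo ≤ hi + 1)]; ring
  calc ∑ j ∈ Icc lo hi, ((j : ℝ) * (j - 1) - 2 * ((s - j : ℕ) : ℝ) * j)
      = ∑ t ∈ range (hi + 1 - lo), (((lo + t : ℕ) : ℝ) * ((lo + t : ℕ) - 1)
          - 2 * ((s : ℝ) - (lo + t : ℕ)) * (lo + t : ℕ)) := by
        rw [← Ico_add_one_right_eq_Icc, sum_Ico_eq_sum_range]
        refine sum_congr rfl fun t ht => ?_
        rw [Nat.cast_sub (by simp at ht; omega)]
    _ = -((hi + 1 - lo) * lo * (hi + 1) : ℝ) := by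
        rw [closed_form, hN, ← h]; push_cast; ring
    _ ≤ 0 := by
        have : (lo : ℝ) ≤ hi := by exact_mod_cast hle
        have : (0 : ℝ) ≤ hi + 1 - lo := by linarith
        have : (0 : ℝ) ≤ (hi + 1 - lo) * lo * (hi + 1) := by positivity
        linarith

theorem coeff_X_mul_derivative {R : Type*} [Semiring R] (p : R[X]) (n : ℕ) :
    (X * derivative p).coeff n = n * p.coeff n := by
  cases n with
  | zero => simp
  | succ n => rw [coeff_X_mul, coeff_derivative, Nat.cast_comm]; push_cast; rfl

theorem coeff_X_sq_mul_derivative_derivative {R : Type*} [CommRing R] (p : R[X]) (n : ℕ) :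
    (X ^ 2 * derivative (derivative p)).coeff n = n * (n - 1) * p.coeff n := by
  rcases n with _ | _ | n
  · simp
  · simp [coeff_X_pow_mul']
  · rw [coeff_X_pow_mul, coeff_derivative, coeff_derivative]
    push_cast; ring

theorem eval_nonneg_of_coeff_nonneg {R : Type*} [CommSemiring R] [PartialOrder R] [IsOrderedRing R]
    {p : R[X]} (h : ∀ n, 0 ≤ p.coeff n) {x : R} (hx : 0 ≤ x) : 0 ≤ p.eval x := by
  rw [eval_eq_sum_range]
  exact sum_nonneg fun i _ => mul_nonneg (h i) (pow_nonneg hx i)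

noncomputable def geomSeriesPoly (a r : ℝ) (k : ℕ) : ℝ[X] :=
  ∑ i ∈ range (k + 1), C (a * r ^ i) * X ^ i

section geomSeriesPoly

variable (a r : ℝ) (k : ℕ)

theorem coeff_geomSeriesPoly (j : ℕ) :
    (geomSeriesPoly a r k).coeff j = if j ≤ k then a * r ^ j else 0 := by
  simp only [geomSeriesPoly, finsetSum_coeff, coeff_C_mul_X_pow]
  simp

theorem eval_geomSeriesPoly (x : ℝ) :
    (geomSeriesPoly a r k).eval x = ∑ i ∈ range (k + 1), a * r ^ i * x ^ i := by
  simp [geomSeriesPoly, eval_finsetSum]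

variable {a r}

theorem eval_geomSeriesPoly_pos (ha : 0 < a) (hr : 0 ≤ r) {x : ℝ} (hx : 0 ≤ x) :
    0 < (geomSeriesPoly a r k).eval x := by
  rw [eval_geomSeriesPoly, sum_range_succ']
  positivity

theorem eval_derivative_geomSeriesPoly_nonneg (ha : 0 ≤ a) (hr : 0 ≤ r) {x : ℝ} (hx : 0 ≤ x) :
    0 ≤ (derivative (geomSeriesPoly a r k)).eval x := by
  refine eval_nonneg_of_coeff_nonneg (fun j => ?_) hx
  rw [coeff_derivative, coeff_geomSeriesPoly]
  split_ifs <;> positivity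

theorem coeff_geomSeriesPoly_mul_derivative_derivative_le (hr : 0 ≤ r) (m : ℕ) :
    (geomSeriesPoly a r k * derivative (derivative (geomSeriesPoly a r k))).coeff m ≤
      (2 * derivative (geomSeriesPoly a r k) ^ 2).coeff m := by
  set p := geomSeriesPoly a r k
  set s := m + 2
  have hX : X ^ 2 * (p * derivative (derivative p) - 2 * derivative p ^ 2) =
      X ^ 2 * derivative (derivative p) * p - 2 * ((X * derivative p) * (X * derivative p)) := by
    ring
  have hterm : ∀ j ∈ range (s + 1),
      (X ^ 2 * derivative (derivative p)).coeff j * p.coeff (s - j)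
        - 2 * ((X * derivative p).coeff j * (X * derivative p).coeff (s - j)) =
      a ^ 2 * r ^ s * (if j ∈ Icc (s - k) (min s k) then
        (j : ℝ) * (j - 1) - 2 * ((s - j : ℕ) : ℝ) * j else 0) := by
    intro j hj
    have hjs : j ≤ s := by simp at hj; omega
    rw [coeff_X_sq_mul_derivative_derivative, coeff_X_mul_derivative, coeff_X_mul_derivative,
      coeff_geomSeriesPoly, coeff_geomSeriesPoly]
    have hpow : r ^ j * r ^ (s - j) = r ^ s := by rw [← pow_add, Nat.add_sub_cancel' hjs]
    by_cases hw : j ∈ Icc (s - k) (min s k)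
    · rw [mem_Icc] at hw
      rw [if_pos (by omega), if_pos (by omega), if_pos (by simpa using hw), ← hpow]
      ring
    · rw [if_neg hw]
      rw [mem_Icc] at hw
      by_cases hjk : j ≤ k
      · rw [if_pos hjk, if_neg (by omega)]; ring
      · rw [if_neg hjk]; ring
  have hcoeff : (X ^ 2 * (p * derivative (derivative p) - 2 * derivative p ^ 2)).coeff s ≤ 0 := by
    rw [hX, coeff_sub, coeff_ofNat_mul, coeff_mul, coeff_mul,
      Nat.sum_antidiagonal_eq_sum_range_succ_mk, Nat.sum_antidiagonal_eq_sum_range_succ_mk,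
      mul_sum, ← sum_sub_distrib, sum_congr rfl hterm, ← mul_sum, sum_ite_mem,
      inter_eq_right.mpr (fun j hj => by simp at hj ⊢; omega)]
    exact mul_nonpos_of_nonneg_of_nonpos (by positivity) (sum_Icc_window_nonpos (by omega))
  rw [coeff_X_pow_mul, coeff_sub] at hcoeff
  linarith

theorem eval_geomSeriesPoly_mul_derivative_derivative_le (hr : 0 ≤ r) {x : ℝ} (hx : 0 ≤ x) :
    (geomSeriesPoly a r k).eval x * (derivative (derivative (geomSeriesPoly a r k))).eval x ≤
      2 * (derivative (geomSeriesPoly a r k)).eval x ^ 2 := by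
  have h := eval_nonneg_of_coeff_nonneg (p := 2 * derivative (geomSeriesPoly a r k) ^ 2 -
    geomSeriesPoly a r k * derivative (derivative (geomSeriesPoly a r k)))
    (fun m => by
      rw [coeff_sub, sub_nonneg]
      exact coeff_geomSeriesPoly_mul_derivative_derivative_le k hr m) hx
  simp only [eval_sub, eval_mul, eval_pow, eval_ofNat] at h
  linarith

end geomSeriesPoly

theorem hasDerivAt_affine (σ c x : ℝ) : HasDerivAt (fun x => σ + c * x) c x := by
  simpa using ((hasDerivAt_id x).const_mul c).const_add σ

theorem deriv_eval_mul_affine (p : ℝ[X]) (σ c : ℝ) :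
    deriv (fun x => p.eval x * (σ + c * x)) =
      fun x => (derivative p).eval x * (σ + c * x) + p.eval x * c :=
  funext fun x => ((p.hasDerivAt x).mul (hasDerivAt_affine σ c x)).deriv

theorem deriv_deriv_eval_mul_affine (p : ℝ[X]) (σ c x : ℝ) :
    deriv (deriv fun x => p.eval x * (σ + c * x)) x =
      (derivative (derivative p)).eval x * (σ + c * x) + 2 * (derivative p).eval x * c := by
  rw [deriv_eval_mul_affine, ((((derivative p).hasDerivAt x).fun_mul
    (hasDerivAt_affine σ c x)).fun_add ((p.hasDerivAt x).mul_const c)).deriv]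
  ring

theorem mul_mul_sub_two_mul_sq_neg {F F₁ F₂ G G₁ : ℝ} (hF : 0 < F) (hF₁ : 0 ≤ F₁) (hG : 0 ≤ G)
    (hG₁ : 0 < G₁) (h : F * F₂ ≤ 2 * F₁ ^ 2) :
    F * G * (F₂ * G + 2 * F₁ * G₁) - 2 * (F₁ * G + F * G₁) ^ 2 < 0 := by
  have hgap : F * G * (F₂ * G + 2 * F₁ * G₁) - 2 * (F₁ * G + F * G₁) ^ 2 =
      G ^ 2 * (F * F₂ - 2 * F₁ ^ 2) - 2 * F * F₁ * G * G₁ - 2 * F ^ 2 * G₁ ^ 2 := by ring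
  rw [hgap]
  have : G ^ 2 * (F * F₂ - 2 * F₁ ^ 2) ≤ 0 :=
    mul_nonpos_of_nonneg_of_nonpos (by positivity) (by linarith)
  have : 0 ≤ F * F₁ * G * G₁ := by positivity
  have : 0 < F ^ 2 * G₁ ^ 2 := by positivity
  linarith

theorem service_time_key_inequality
    (n : ℕ) (hn : 2 ≤ n) (σ Ts : ℝ) (hσ : 0 < σ) (hTs : 0 < Ts)
    (k : ℕ) (b0 : ℝ) (hb0 : 0 < b0) (b : ℕ → ℝ)
    (hb : ∀ i, b i = 2 ^ i * b0) :
    let f : ℝ → ℝ := fun γ => ∑ i ∈ Finset.range (k + 1), b i * γ ^ i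
    let g : ℝ → ℝ := fun γ => σ + ((n:ℝ) / ((n:ℝ) - 1)) * Ts * γ
    let S : ℝ → ℝ := fun γ => f γ * g γ
    ∀ γ ∈ Set.Icc (0:ℝ) 1,
      S γ * deriv (deriv S) γ - 2 * (deriv S γ) ^ 2 < 0 := by
  rintro f g S γ ⟨hγ, -⟩
  set c : ℝ := (n : ℝ) / ((n : ℝ) - 1) * Ts
  have hc : 0 < c := by
    have : (2 : ℝ) ≤ n := by exact_mod_cast hn
    exact mul_pos (div_pos (by linarith) (by linarith)) hTs
  set p := geomSeriesPoly b0 2 k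
  have hS : S = fun x => p.eval x * (σ + c * x) := by
    funext x
    simp only [S, f, g, p, c, eval_geomSeriesPoly, hb, mul_comm b0]
  rw [hS, deriv_deriv_eval_mul_affine, deriv_eval_mul_affine]
  exact mul_mul_sub_two_mul_sq_neg (eval_geomSeriesPoly_pos k hb0 zero_le_two hγ)
    (eval_derivative_geomSeriesPoly_nonneg k hb0.le zero_le_two hγ) (by positivity) hc
    (eval_geomSeriesPoly_mul_derivative_derivative_le k zero_le_two hγ)
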